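/- arXiv:2003.01193 — 6 statements merged into one kernel-verified Lean document; each statement's English description precedes it below -/
import Mathlib

section
/- Every weakly-ε-modular function f : 2^Ω → ℝ is 2ε-modular, i.e., |f(A)+f(B)-f(A∪B)-f(A∩B)| ≤ 2ε for all (not necessarily disjoint) A, B ⊆ Ω. -/
theorem stmt_1 {Ω : Type*} [DecidableEq Ω] [Fintype Ω] (ε : ℝ) (hε : 0 < ε)
    (f : Finset Ω → ℝ)
    (hf : ∀ A B : Finset Ω, Disjoint A B → |f A + f B - f (A ∪ B) - f (A ∩ B)| ≤ ε) :
    ∀ A B : Finset Ω, |f A + f B - f (A ∪ B) - f (A ∩ B)| ≤ 2 * ε := by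
  intro A B
  have h1 := hf A (B \ A) (Finset.disjoint_sdiff)
  have h2 := hf (B \ A) (A ∩ B) (by
    rw [Finset.disjoint_left]; intro x hx hx2
    exact (Finset.mem_sdiff.mp hx).2 (Finset.mem_inter.mp hx2).1)
  rw [Finset.union_sdiff_self_eq_union, Finset.inter_sdiff_self] at h1
  have hu : B \ A ∪ A ∩ B = B := by
    ext x; simp [Finset.mem_sdiff, Finset.mem_inter]; tauto
  have hi : (B \ A) ∩ (A ∩ B) = ∅ := by
    ext x; simp [Finset.mem_sdiff, Finset.mem_inter]; tauto
  rw [hu, hi] at h2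
  calc |f A + f B - f (A ∪ B) - f (A ∩ B)|
      = |(f A + f (B \ A) - f (A ∪ B) - f ∅) - (f (B \ A) + f (A ∩ B) - f B - f ∅)| := by
        ring_nf
    _ ≤ _ + _ := abs_sub _ _
    _ ≤ 2 * ε := by linarith
end

section
/- Suppose every 1-additive function on 2^Ω admits an additive function at uniform distance at most K(m), where m = |Ω|. Then every weakly-1-modular function on 2^Ω admits a modular function at uniform distance at most K(m); i.e., K_w(m) ≤ K(m). -/
/-- `f` is 1-additive: vanishes on `∅` and is additive on disjoint sets up to error 1. -/
def OneAdditive {Ω : Type*} [DecidableEq Ω] (f : Finset Ω → ℝ) : Prop :=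
  f ∅ = 0 ∧ ∀ A B : Finset Ω, Disjoint A B → |f A + f B - f (A ∪ B)| ≤ 1

/-- `g` is weakly-1-modular. -/
def WeaklyOneModular {Ω : Type*} [DecidableEq Ω] (g : Finset Ω → ℝ) : Prop :=
  ∀ A B : Finset Ω, Disjoint A B → |g A + g B - g (A ∪ B) - g (A ∩ B)| ≤ 1

/-- `ν` is modular. -/
def Modular {Ω : Type*} [DecidableEq Ω] (ν : Finset Ω → ℝ) : Prop :=
  ∀ A B : Finset Ω, ν A + ν B = ν (A ∪ B) + ν (A ∩ B)

/-- `μ` is a finitely-additive signed measure. -/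
def IsAdditive {Ω : Type*} [DecidableEq Ω] (μ : Finset Ω → ℝ) : Prop :=
  μ ∅ = 0 ∧ ∀ A B : Finset Ω, Disjoint A B → μ (A ∪ B) = μ A + μ B

theorem stmt_3 (m : ℕ) (K : ℝ)
    (hK : ∀ f : Finset (Fin m) → ℝ, OneAdditive f →
      ∃ μ : Finset (Fin m) → ℝ, IsAdditive μ ∧ ∀ A, |f A - μ A| ≤ K) :
    ∀ g : Finset (Fin m) → ℝ, WeaklyOneModular g →
      ∃ ν : Finset (Fin m) → ℝ, Modular ν ∧ ∀ A, |g A - ν A| ≤ K := by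
  intro g hg
  set f : Finset (Fin m) → ℝ := fun A => g A - g ∅ with hf
  have hfadd : OneAdditive f := by
    constructor
    · simp [hf]
    · intro A B hAB
      have h := hg A B hAB
      rw [Finset.disjoint_iff_inter_eq_empty] at hAB
      rw [hAB] at h
      have : f A + f B - f (A ∪ B) = g A + g B - g (A ∪ B) - g ∅ := by
        simp [hf]; ring
      rw [this]; exact h
  obtain ⟨μ, ⟨hμ0, hμadd⟩, hμK⟩ := hK f hfadd
  refine ⟨fun A => μ A + g ∅, ?_, ?_⟩
  · intro A B
    have h1 : μ A = μ (A \ B) + μ (A ∩ B) := by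
      rw [← hμadd _ _ (Finset.disjoint_sdiff_inter A B), Finset.sdiff_union_inter]
    have h2 : μ (A ∪ B) = μ (A \ B) + μ B := by
      have : A ∪ B = (A \ B) ∪ B := by
        rw [Finset.sdiff_union_self_eq_union]
      rw [this, hμadd _ _ Finset.sdiff_disjoint]
    dsimp only
    rw [h1, h2]; ring
  · intro A
    have := hμK A
    have heq : g A - (μ A + g ∅) = f A - μ A := by simp [hf]; ring
    rw [heq]; exact this
end

section
/- Suppose every weakly-1-modular function on 2^Ω admits a modular function at uniform distance at most K_w(m). Then every 1-additive function f on 2^Ω admits a finitely-additive function μ with sup_A |f(A)-μ(A)| ≤ 2·K_w(m); i.e., K(m) ≤ 2·K_w(m). -/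
/-!
On disjoint sets the modularity defect `g A + g B - g (A ∪ B) - g (A ∩ B)` is the additivity
defect shifted by `g ∅`. Hence a 1-additive `f` is weakly 1-modular, a modular `ν` close to `f`
becomes additive after subtracting the constant `ν ∅`, and since `f ∅ = 0` that constant is
itself at most `K_w` in absolute value, which doubles the bound.
-/

section

variable {Ω : Type*}

theorem abs_sub_sub_apply_empty_le {f ν : Finset Ω → ℝ} (hf : f ∅ = 0) {K : ℝ}
    (hclose : ∀ A, |f A - ν A| ≤ K) (A : Finset Ω) :
    |f A - (ν A - ν ∅)| ≤ 2 * K := by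
  have hν : |ν ∅| ≤ K := by simpa [hf] using hclose ∅
  calc |f A - (ν A - ν ∅)| = |(f A - ν A) + ν ∅| := by
        rw [sub_sub_eq_add_sub, add_sub_right_comm]
    _ ≤ |f A - ν A| + |ν ∅| := abs_add_le _ _
    _ ≤ 2 * K := by linarith [hclose A]

variable [DecidableEq Ω]

theorem OneAdditive.weaklyOneModular {f : Finset Ω → ℝ} (hf : OneAdditive f) :
    WeaklyOneModular f := by
  intro A B hAB
  rw [Finset.disjoint_iff_inter_eq_empty.mp hAB, hf.1, sub_zero]
  exact hf.2 A B hAB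

theorem Modular.isAdditive_sub_apply_empty {ν : Finset Ω → ℝ} (hν : Modular ν) :
    IsAdditive fun A => ν A - ν ∅ := by
  refine ⟨sub_self _, fun A B hAB => ?_⟩
  have h := hν A B
  rw [Finset.disjoint_iff_inter_eq_empty.mp hAB] at h
  linarith

end

theorem stmt_4 (m : ℕ) (Kw : ℝ)
    (hKw : ∀ g : Finset (Fin m) → ℝ, WeaklyOneModular g →
      ∃ ν : Finset (Fin m) → ℝ, Modular ν ∧ ∀ A, |g A - ν A| ≤ Kw) :
    ∀ f : Finset (Fin m) → ℝ, OneAdditive f →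
      ∃ μ : Finset (Fin m) → ℝ, IsAdditive μ ∧ ∀ A, |f A - μ A| ≤ 2 * Kw := by
  intro f hf
  obtain ⟨ν, hν, hclose⟩ := hKw f hf.weaklyOneModular
  exact ⟨fun A => ν A - ν ∅, hν.isAdditive_sub_apply_empty,
    abs_sub_sub_apply_empty_le hf.1 hclose⟩
end

section
/- The function f_{k,n} is 1-additive: f_{k,n}(∅) = 0 and |f_{k,n}(A) + f_{k,n}(B) - f_{k,n}(A∪B)| ≤ 1 for all disjoint subsets A, B of Ω_{k,n}. -/
open Finset

/-- The function `f_{k,n}` on the power set of `Ω_{k,n} = Fin n × Fin k`,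
where `X_j = {j} × Fin k`. -/
def fkn (n k : ℕ) (A : Finset (Fin n × Fin k)) : ℝ :=
  if A = ∅ then 0
  else if (∀ j : Fin n, ∃ i : Fin k, (j, i) ∈ A) ∧ (∃ j : Fin n, ∀ i : Fin k, (j, i) ∈ A)
    then 3 else 1

theorem stmt_5 (n k : ℕ) (hn : 2 ≤ n) (hk : 2 ≤ k) :
    fkn n k ∅ = 0 ∧
      ∀ A B : Finset (Fin n × Fin k), Disjoint A B →
        |fkn n k A + fkn n k B - fkn n k (A ∪ B)| ≤ 1 := by
  have hk0 : 0 < k := by omega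
  refine ⟨by simp [fkn], fun A B hAB => ?_⟩
  by_cases hA : A = ∅
  · subst hA; simp [fkn]
  by_cases hB : B = ∅
  · subst hB; simp [fkn]
  have hU : ¬ (A ∪ B = ∅) := by
    simp [Finset.union_eq_empty]; tauto
  have mono : ∀ S T : Finset (Fin n × Fin k),
      ((∀ j : Fin n, ∃ i : Fin k, (j, i) ∈ S) ∧ (∃ j : Fin n, ∀ i : Fin k, (j, i) ∈ S)) →
      ((∀ j : Fin n, ∃ i : Fin k, (j, i) ∈ S ∪ T) ∧ (∃ j : Fin n, ∀ i : Fin k, (j, i) ∈ S ∪ T)) := by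
    rintro S T ⟨h1, j, h2⟩
    exact ⟨fun j' => (h1 j').imp (fun i hi => Finset.mem_union_left _ hi),
      j, fun i => Finset.mem_union_left _ (h2 i)⟩
  by_cases hPA : (∀ j : Fin n, ∃ i : Fin k, (j, i) ∈ A) ∧ (∃ j : Fin n, ∀ i : Fin k, (j, i) ∈ A)
  · have hPB : ¬((∀ j : Fin n, ∃ i : Fin k, (j, i) ∈ B) ∧ (∃ j : Fin n, ∀ i : Fin k, (j, i) ∈ B)) := by
      rintro ⟨h1, -⟩
      obtain ⟨j, h2⟩ := hPA.2
      obtain ⟨i, hi⟩ := h1 j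
      exact (Finset.disjoint_left.mp hAB (h2 i)) hi
    simp only [fkn, if_neg hA, if_neg hB, if_neg hU, if_pos hPA, if_neg hPB,
      if_pos (mono A B hPA)]
    norm_num
  by_cases hPB : (∀ j : Fin n, ∃ i : Fin k, (j, i) ∈ B) ∧ (∃ j : Fin n, ∀ i : Fin k, (j, i) ∈ B)
  · have hU' := mono B A hPB
    rw [Finset.union_comm] at hU'
    simp only [fkn, if_neg hA, if_neg hB, if_neg hU, if_neg hPA, if_pos hPB, if_pos hU']
    norm_num
  · simp only [fkn, if_neg hA, if_neg hB, if_neg hU, if_neg hPA, if_neg hPB]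
    split <;> norm_num
end

section
/- For the function f_{k,n} and any finitely-additive signed measure μ on 2^{Ω_{k,n}}, choosing for each j ≤ n a point i_j ∈ X_j minimizing |μ({i})| over i ∈ X_j, one has n · sup_{A ⊆ Ω_{k,n}} |f_{k,n}(A) - μ(A)| ≥ 3n - μ(Ω_{k,n}) - Σ_{j=1}^n μ({i_ℓ : ℓ ≠ j}). -/
open Finset

/-!
For every block `X_j`, the set `X_j ∪ {(ℓ, i ℓ) : ℓ ≠ j}` meets every block and contains `X_j`,
so `f` takes the value `3` on it and `3 - μ X_j - μ {(ℓ, i ℓ) : ℓ ≠ j} ≤ C`. Summing over `j`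
and using `∑ j, μ X_j = μ Ω` gives the bound.
-/

namespace IsAdditive

variable {Ω ι : Type*} [DecidableEq Ω] {μ : Finset Ω → ℝ}

theorem map_eq_sum_singleton (hμ : IsAdditive μ) (A : Finset Ω) :
    μ A = ∑ x ∈ A, μ {x} := by
  induction A using Finset.induction_on with
  | empty => simpa using hμ.1
  | insert a A ha ih =>
    rw [sum_insert ha, ← ih, ← singleton_union, hμ.2 _ _ (disjoint_singleton_left.mpr ha)]

theorem map_biUnion [DecidableEq ι] (hμ : IsAdditive μ) {s : Finset ι} {f : ι → Finset Ω}
    (hf : (s : Set ι).PairwiseDisjoint f) :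
    μ (s.biUnion f) = ∑ j ∈ s, μ (f j) := by
  rw [hμ.map_eq_sum_singleton, sum_biUnion hf]
  exact sum_congr rfl fun j _ => (hμ.map_eq_sum_singleton (f j)).symm

end IsAdditive

section Blocks

variable {n k : ℕ}

/-- The block `X_j` of `Ω_{k,n}`. -/
def block (j : Fin n) : Finset (Fin n × Fin k) := {j} ×ˢ univ

theorem pairwiseDisjoint_block :
    ((univ : Finset (Fin n)) : Set (Fin n)).PairwiseDisjoint (block (k := k)) := by
  intro a _ b _ hab
  exact disjoint_product.mpr (Or.inl (disjoint_singleton.mpr hab))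

theorem biUnion_block : (univ : Finset (Fin n)).biUnion (block (k := k)) = univ := by
  ext p
  simp [block]

theorem IsAdditive.map_univ_eq_sum_block {μ : Finset (Fin n × Fin k) → ℝ} (hμ : IsAdditive μ) :
    μ univ = ∑ j, μ (block j) := by
  rw [← hμ.map_biUnion pairwiseDisjoint_block, biUnion_block]

theorem disjoint_block_image_erase (i : Fin n → Fin k) (j : Fin n) :
    Disjoint (block j) ((univ.erase j).image fun ℓ => (ℓ, i ℓ)) := by
  simp +contextual [block, disjoint_left]

theorem fkn_block_union_image_erase (i : Fin n → Fin k) (j : Fin n) :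
    fkn n k (block j ∪ (univ.erase j).image fun ℓ => (ℓ, i ℓ)) = 3 := by
  have hmem_block : ∀ i' : Fin k, (j, i') ∈ block j := by simp [block]
  have hne : block j ∪ (univ.erase j).image (fun ℓ => (ℓ, i ℓ)) ≠ ∅ :=
    nonempty_iff_ne_empty.mp ⟨(j, i j), mem_union_left _ (hmem_block _)⟩
  rw [fkn, if_neg hne, if_pos]
  refine ⟨fun ℓ => ⟨i ℓ, ?_⟩, j, fun i' => mem_union_left _ (hmem_block i')⟩
  by_cases hℓ : ℓ = j
  · exact mem_union_left _ (hℓ ▸ hmem_block _)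
  · exact mem_union_right _ (mem_image.mpr ⟨ℓ, mem_erase.mpr ⟨hℓ, mem_univ ℓ⟩, rfl⟩)

end Blocks

theorem stmt_6_general (n k : ℕ)
    (μ : Finset (Fin n × Fin k) → ℝ) (hμ : IsAdditive μ)
    (i : Fin n → Fin k)
    (C : ℝ) (hC : ∀ A : Finset (Fin n × Fin k), |fkn n k A - μ A| ≤ C) :
    (n : ℝ) * C ≥
      3 * n - μ univ -
        ∑ j : Fin n, μ ((univ.erase j).image (fun ℓ => (ℓ, i ℓ))) := by
  have hblock : ∀ j, 3 - μ (block j) - μ ((univ.erase j).image fun ℓ => (ℓ, i ℓ)) ≤ C := by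
    intro j
    have h := (abs_le.mp (hC (block j ∪ (univ.erase j).image fun ℓ => (ℓ, i ℓ)))).2
    rw [fkn_block_union_image_erase, hμ.2 _ _ (disjoint_block_image_erase i j)] at h
    linarith
  have hsum := sum_le_sum fun j (_ : j ∈ univ) => hblock j
  simp only [sum_sub_distrib, sum_const, card_univ, Fintype.card_fin, nsmul_eq_mul] at hsum
  rw [hμ.map_univ_eq_sum_block]
  linarith

theorem stmt_6 (n k : ℕ) (hn : 2 ≤ n) (hk : 2 ≤ k)
    (μ : Finset (Fin n × Fin k) → ℝ) (hμ : IsAdditive μ)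
    (i : Fin n → Fin k)
    (hi : ∀ j : Fin n, ∀ i' : Fin k, |μ {(j, i j)}| ≤ |μ {(j, i')}|)
    (C : ℝ) (hC : ∀ A : Finset (Fin n × Fin k), |fkn n k A - μ A| ≤ C) :
    (n : ℝ) * C ≥
      3 * n - μ univ -
        ∑ j : Fin n, μ ((univ.erase j).image (fun ℓ => (ℓ, i ℓ))) :=
  stmt_6_general n k μ hμ i C hC
end

section
/- For every k, n ≥ 2, the optimal Kalton constant K(kn) on a set of kn elements satisfies K(kn) ≥ 3 - 4k/((n+1)k-1) - (n-1)/k · 4k/((n+1)k-1); equivalently, K(kn) ≥ a_{k,n} where a_{k,n} → 3 as k, n → ∞. -/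
open Finset

/-!
Write `Ω = Fin n × Fin k`, so that the blocks `X_j` are the rows `{j} × Fin k`, and let `μ` be an
additive set function within `K` of `f = fkn n k`, of total mass `S`. A cross (a row together with
a column) meets every row and contains one, so `3 - K ≤ μ (cross)`; the complement of a column
misses a point of every row, so `f ≤ 1` there and `μ ≤ 1 + K`. Summing over all `n k` crosses
counts every point `n + k - 1` times, and summing over the `k` column complements counts every
point `k - 1` times; eliminating `S` from the two averaged inequalities gives the bound.
-/

theorem IsAdditive.apply_eq_sum {Ω : Type*} [DecidableEq Ω] {μ : Finset Ω → ℝ}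
    (hμ : IsAdditive μ) (A : Finset Ω) : μ A = ∑ x ∈ A, μ {x} := by
  induction A using Finset.induction_on with
  | empty => simp [hμ.1]
  | insert a s ha ih =>
    rw [sum_insert ha, ← ih, insert_eq, hμ.2 _ _ (disjoint_singleton_left.mpr ha)]

section Cross

variable {α β : Type*} [Fintype α] [Fintype β] [DecidableEq α] [DecidableEq β]

def cross (a : α) (b : β) : Finset (α × β) := {a} ×ˢ univ ∪ univ ×ˢ {b}

lemma mem_cross {a : α} {b : β} {x : α × β} : x ∈ cross a b ↔ x.1 = a ∨ x.2 = b := by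
  simp only [cross, mem_union, mem_product, mem_singleton, mem_univ, and_true, true_and]

lemma sum_cross (e : α × β → ℝ) (a : α) (b : β) :
    ∑ x ∈ cross a b, e x = ∑ i, e (a, i) + ∑ j, e (j, b) - e (a, b) := by
  have hinter : ({a} ×ˢ univ ∩ univ ×ˢ {b} : Finset (α × β)) = {(a, b)} := by
    rw [product_inter_product]; simp
  have h := sum_union_inter (s₁ := {a} ×ˢ (univ : Finset β)) (s₂ := univ ×ˢ {b}) (f := e)
  rw [hinter, sum_singleton, sum_product, sum_product_right, sum_singleton,
    sum_singleton] at h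
  rw [cross]
  linarith

lemma sum_sum_sum_cross (e : α × β → ℝ) :
    ∑ a, ∑ b, ∑ x ∈ cross a b, e x =
      ((Fintype.card α : ℝ) + Fintype.card β - 1) * ∑ x, e x := by
  simp only [sum_cross, sum_sub_distrib, sum_add_distrib, sum_const, card_univ, nsmul_eq_mul,
    ← mul_sum, Fintype.sum_prod_type]
  rw [sum_comm (f := fun j b => e (j, b))]
  ring

lemma sum_sum_compl_column (e : α × β → ℝ) :
    ∑ b, ∑ x ∈ (univ ×ˢ {b} : Finset (α × β))ᶜ, e x = ((Fintype.card β : ℝ) - 1) * ∑ x, e x := by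
  have hcompl (b : β) : ∑ x ∈ (univ ×ˢ {b} : Finset (α × β))ᶜ, e x = ∑ x, e x - ∑ j, e (j, b) := by
    rw [← sum_compl_add_sum (univ ×ˢ {b}) e, sum_product_right, sum_singleton]
    ring
  simp only [hcompl, sum_sub_distrib, sum_const, card_univ, nsmul_eq_mul]
  rw [Fintype.sum_prod_type, sum_comm]
  ring

end Cross

section Witness

variable {n k : ℕ}

def IsHeavy (A : Finset (Fin n × Fin k)) : Prop :=
  (∀ j : Fin n, ∃ i : Fin k, (j, i) ∈ A) ∧ (∃ j : Fin n, ∀ i : Fin k, (j, i) ∈ A)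

lemma IsHeavy.nonempty {A : Finset (Fin n × Fin k)} (hA : IsHeavy A) : A.Nonempty := by
  obtain ⟨j, hj⟩ := hA.2
  obtain ⟨i, hi⟩ := hA.1 j
  exact ⟨_, hi⟩

lemma IsHeavy.mono {A B : Finset (Fin n × Fin k)} (hAB : A ⊆ B) (hA : IsHeavy A) :
    IsHeavy B :=
  ⟨fun j => (hA.1 j).imp fun _ hi => hAB hi, hA.2.imp fun _ hj i => hAB (hj i)⟩

lemma IsHeavy.not_isHeavy_of_disjoint {A B : Finset (Fin n × Fin k)} (hAB : Disjoint A B)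
    (hA : IsHeavy A) : ¬ IsHeavy B := by
  rintro ⟨hB, -⟩
  obtain ⟨j, hj⟩ := hA.2
  obtain ⟨i, hi⟩ := hB j
  exact disjoint_left.mp hAB (hj i) hi

lemma fkn_empty : fkn n k ∅ = 0 := if_pos rfl

lemma fkn_of_isHeavy {A : Finset (Fin n × Fin k)} (hA : IsHeavy A) : fkn n k A = 3 := by
  rw [fkn, if_neg hA.nonempty.ne_empty]
  exact if_pos hA

lemma fkn_of_not_isHeavy {A : Finset (Fin n × Fin k)} (hA₀ : A.Nonempty) (hA : ¬ IsHeavy A) :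
    fkn n k A = 1 := by
  rw [fkn, if_neg hA₀.ne_empty]
  exact if_neg hA

lemma fkn_le_one_of_not_isHeavy {A : Finset (Fin n × Fin k)} (hA : ¬ IsHeavy A) :
    fkn n k A ≤ 1 := by
  rcases A.eq_empty_or_nonempty with rfl | hA₀
  · norm_num [fkn_empty]
  · rw [fkn_of_not_isHeavy hA₀ hA]

lemma fkn_oneAdditive (n k : ℕ) : OneAdditive (fkn n k) := by
  refine ⟨fkn_empty, fun A B hAB => ?_⟩
  rcases A.eq_empty_or_nonempty with rfl | hA₀
  · simp [fkn_empty]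
  rcases B.eq_empty_or_nonempty with rfl | hB₀
  · simp [fkn_empty]
  have hU₀ : (A ∪ B).Nonempty := hA₀.mono subset_union_left
  by_cases hA : IsHeavy A
  · rw [fkn_of_isHeavy hA, fkn_of_not_isHeavy hB₀ (hA.not_isHeavy_of_disjoint hAB),
      fkn_of_isHeavy (hA.mono subset_union_left)]
    norm_num
  by_cases hB : IsHeavy B
  · rw [fkn_of_not_isHeavy hA₀ hA, fkn_of_isHeavy hB, fkn_of_isHeavy (hB.mono subset_union_right)]
    norm_num
  rw [fkn_of_not_isHeavy hA₀ hA, fkn_of_not_isHeavy hB₀ hB]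
  by_cases hU : IsHeavy (A ∪ B)
  · rw [fkn_of_isHeavy hU]; norm_num
  · rw [fkn_of_not_isHeavy hU₀ hU]; norm_num

lemma isHeavy_cross (a : Fin n) (b : Fin k) : IsHeavy (cross a b) :=
  ⟨fun _ => ⟨b, mem_cross.mpr (Or.inr rfl)⟩, ⟨a, fun _ => mem_cross.mpr (Or.inl rfl)⟩⟩

lemma not_isHeavy_compl_column (b : Fin k) :
    ¬ IsHeavy (univ ×ˢ {b} : Finset (Fin n × Fin k))ᶜ := by
  rintro ⟨-, j, hj⟩
  simpa using hj b

end Witness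

lemma kalton_bound_of_averages {k n K S : ℝ} (hk : 1 < k) (hn : 0 ≤ n)
    (hcross : n * k * (3 - K) ≤ (n + k - 1) * S) (hcolumn : (k - 1) * S ≤ k * (1 + K)) :
    K ≥ 3 - 4 * k / ((n + 1) * k - 1) - (n - 1) / k * (4 * k / ((n + 1) * k - 1)) := by
  have hD : 0 < (n + 1) * k - 1 := by nlinarith
  have hkey : 3 * n * k - k - 4 * n + 1 ≤ K * ((n + 1) * k - 1) := by
    have hscaled : k * (3 * n * k - k - 4 * n + 1) ≤ k * (K * ((n + 1) * k - 1)) := by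
      nlinarith [mul_le_mul_of_nonneg_left hcross (by linarith : 0 ≤ k - 1),
        mul_le_mul_of_nonneg_left hcolumn (by linarith : 0 ≤ n + k - 1)]
    exact le_of_mul_le_mul_left hscaled (by linarith)
  have hrhs : 3 - 4 * k / ((n + 1) * k - 1) - (n - 1) / k * (4 * k / ((n + 1) * k - 1)) =
      (3 * n * k - k - 4 * n + 1) / ((n + 1) * k - 1) := by
    have hk₀ : k ≠ 0 := (zero_lt_one.trans hk).ne'
    set D := (n + 1) * k - 1 with hD_def
    have hD₀ : D ≠ 0 := hD.ne'
    field_simp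
    rw [hD_def]
    ring
  rw [ge_iff_le, hrhs, div_le_iff₀ hD]
  exact hkey

theorem stmt_9_general (k n : ℕ) (hk : 2 ≤ k) (K : ℝ)
    (hK : ∀ f : Finset (Fin n × Fin k) → ℝ, OneAdditive f →
      ∃ μ : Finset (Fin n × Fin k) → ℝ, IsAdditive μ ∧ ∀ A, |f A - μ A| ≤ K) :
    K ≥ 3 - 4 * k / ((n + 1) * k - 1) - ((n : ℝ) - 1) / k * (4 * k / ((n + 1) * k - 1)) := by
  obtain ⟨μ, hμ, hfμ⟩ := hK (fkn n k) (fkn_oneAdditive n k)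
  have hcross (a : Fin n) (b : Fin k) : 3 - K ≤ ∑ x ∈ cross a b, μ {x} := by
    have h := abs_le.mp (hfμ (cross a b))
    rw [fkn_of_isHeavy (isHeavy_cross a b), hμ.apply_eq_sum] at h
    linarith
  have hcolumn (b : Fin k) : ∑ x ∈ (univ ×ˢ {b} : Finset (Fin n × Fin k))ᶜ, μ {x} ≤ 1 + K := by
    have h := abs_le.mp (hfμ (univ ×ˢ {b})ᶜ)
    rw [hμ.apply_eq_sum] at h
    linarith [fkn_le_one_of_not_isHeavy (not_isHeavy_compl_column (n := n) b)]
  refine kalton_bound_of_averages (S := ∑ x, μ {x}) (by exact_mod_cast hk) n.cast_nonneg ?_ ?_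
  · have h := sum_le_sum fun a (_ : a ∈ univ) => sum_le_sum fun b (_ : b ∈ univ) => hcross a b
    simp only [sum_sum_sum_cross, sum_const, card_univ, Fintype.card_fin, nsmul_eq_mul] at h
    linarith
  · have h := sum_le_sum fun b (_ : b ∈ univ) => hcolumn b
    simp only [sum_sum_compl_column, sum_const, card_univ, Fintype.card_fin, nsmul_eq_mul] at h
    linarith

theorem stmt_9 (k n : ℕ) (hk : 2 ≤ k) (hn : 2 ≤ n) (K : ℝ)
    (hK : ∀ f : Finset (Fin n × Fin k) → ℝ, OneAdditive f →
      ∃ μ : Finset (Fin n × Fin k) → ℝ, IsAdditive μ ∧ ∀ A, |f A - μ A| ≤ K) :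
    K ≥ 3 - 4 * k / ((n + 1) * k - 1) - ((n : ℝ) - 1) / k * (4 * k / ((n + 1) * k - 1)) :=
  stmt_9_general k n hk K hK
end
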